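/- A snake graph has exactly two perfect matchings consisting entirely of boundary edges. -/

import Mathlib

/- ## Snake graphs on the integer lattice -/

abbrev Vtx : Type := ℤ × ℤ
abbrev Edge : Type := Sym2 Vtx

/-- One gluing move: `true` = new tile to the right, `false` = new tile on top. -/
def mv (p : Vtx) (m : Bool) : Vtx := if m then (p.1 + 1, p.2) else (p.1, p.2 + 1)

/-- Positions (south-west corners) of the tiles of the snake graph with move list `ms`;
the snake graph has `ms.length + 1` tiles, the first at `(0,0)`. -/
def positions (ms : List Bool) : List Vtx := ms.scanl mv (0, 0)

def tilePos (ms : List Bool) (t : ℕ) : Vtx := (positions ms).getD t (0, 0)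

def tileVerts (p : Vtx) : Finset Vtx :=
  {p, (p.1 + 1, p.2), (p.1, p.2 + 1), (p.1 + 1, p.2 + 1)}

def eS (p : Vtx) : Edge := s(p, (p.1 + 1, p.2))
def eW (p : Vtx) : Edge := s(p, (p.1, p.2 + 1))
def eN (p : Vtx) : Edge := s((p.1, p.2 + 1), (p.1 + 1, p.2 + 1))
def eE (p : Vtx) : Edge := s((p.1 + 1, p.2), (p.1 + 1, p.2 + 1))

def tileEdges (p : Vtx) : Finset Edge := {eS p, eW p, eN p, eE p}

def snakeVerts (ms : List Bool) : Finset Vtx := (positions ms).toFinset.biUnion tileVerts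
def snakeEdges (ms : List Bool) : Finset Edge := (positions ms).toFinset.biUnion tileEdges

/-- A perfect matching of the snake graph: a set of edges covering every vertex exactly once. -/
def IsPerfectMatching (ms : List Bool) (P : Finset Edge) : Prop :=
  P ⊆ snakeEdges ms ∧ ∀ v ∈ snakeVerts ms, ∃! e, e ∈ P ∧ v ∈ e

/-- Same, for a possibly infinite set of edges. -/
def IsPerfectMatchingSet (ms : List Bool) (P : Set Edge) : Prop :=
  P ⊆ ↑(snakeEdges ms) ∧ ∀ v ∈ snakeVerts ms, ∃! e, e ∈ P ∧ v ∈ e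

/-- A boundary edge: an edge belonging to exactly one tile. -/
def IsBoundaryEdge (ms : List Bool) (e : Edge) : Prop :=
  ((positions ms).toFinset.filter (fun p => e ∈ tileEdges p)).card = 1

/-- Two boundary edges lie in the same parity class iff they are joined by an
even-length walk along the boundary (consecutive boundary edges share a vertex). -/
def SameParity (ms : List Bool) (e f : Edge) : Prop :=
  Relation.ReflTransGen
    (fun a b => ∃ c,
      (a ≠ c ∧ IsBoundaryEdge ms a ∧ IsBoundaryEdge ms c ∧ ∃ v, v ∈ a ∧ v ∈ c) ∧
      (c ≠ b ∧ IsBoundaryEdge ms c ∧ IsBoundaryEdge ms b ∧ ∃ v, v ∈ c ∧ v ∈ b)) e f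

/- ## The orientation of diagonals induced by a perfect matching -/

def NWv (p : Vtx) : Vtx := (p.1, p.2 + 1)
def SEv (p : Vtx) : Vtx := (p.1 + 1, p.2)
def NEv (p : Vtx) : Vtx := (p.1 + 1, p.2 + 1)

/-- Entry point of the alternating walk on the diagonal of tile `t`
(`o t = true` means the diagonal is oriented "down", i.e. from NW to SE). -/
def diagIn (ms : List Bool) (o : ℕ → Bool) (t : ℕ) : Vtx :=
  if o t then NWv (tilePos ms t) else SEv (tilePos ms t)

def diagOut (ms : List Bool) (o : ℕ → Bool) (t : ℕ) : Vtx :=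
  if o t then SEv (tilePos ms t) else NWv (tilePos ms t)

/-- The list of matched edges traversed by the alternating walk from the SW vertex of the
first tile to the NE vertex of the last tile, given the diagonal orientations `o`. -/
def walkEdgeList (ms : List Bool) (o : ℕ → Bool) : List Edge :=
  s(((0, 0) : Vtx), diagIn ms o 0) ::
    ((List.range ms.length).map fun t => s(diagOut ms o t, diagIn ms o (t + 1))) ++
      [s(diagOut ms o ms.length, NEv (tilePos ms ms.length))]

/-- `o` is the orientation of the diagonals induced by the perfect matching `P`:
the alternating walk uses each matched edge exactly once, and its matched edges are
exactly the edges of `P`. -/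
def IsInducedOrientation (ms : List Bool) (P : Finset Edge) (o : ℕ → Bool) : Prop :=
  (walkEdgeList ms o).Nodup ∧ P = (walkEdgeList ms o).toFinset

/-- The set of (0-indexed) tiles whose diagonal is positive: "down" and relative
orientation `+1` (equivalently even index), or "up" and odd index. -/
def heightSet (ms : List Bool) (o : ℕ → Bool) : Set ℕ :=
  {t | t ≤ ms.length ∧ (o t = true ↔ Even t)}

def HeightOf (ms : List Bool) (P : Finset Edge) (I : Set ℕ) : Prop :=
  ∃ o, IsInducedOrientation ms P o ∧ I = heightSet ms o

/- ## The quiver of a snake graph (0-indexed tiles) -/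

/-- Arrow relation of the quiver `Q_G` (0-indexed: tile `i` here is tile `i+1` of the paper). -/
def quiverRel (ms : List Bool) (i j : ℕ) : Prop :=
  (j = i + 1 ∧ i < ms.length ∧ (ms.getD i true = true ↔ Even i)) ∨
  (i = j + 1 ∧ j < ms.length ∧ ¬(ms.getD j true = true ↔ Even j))

def leQ (ms : List Bool) (i j : ℕ) : Prop :=
  i = j ∨ Relation.TransGen (quiverRel ms) i j

/-- Order ideals (downward closed subsets) of the poset of `Q_G`. -/
def IsOrderIdealQ (ms : List Bool) (I : Set ℕ) : Prop :=
  I ⊆ {t | t ≤ ms.length} ∧ ∀ x ∈ I, ∀ y, leQ ms y x → y ∈ I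

/-- `P'` is obtained from `P` by a positive twist at tile `t` (0-indexed; paper's
`j = t+1`, so paper's "`j` odd" is "`t` even"). -/
def PositiveTwist (ms : List Bool) (P P' : Finset Edge) (t : ℕ) : Prop :=
  t ≤ ms.length ∧
    ((Even t ∧ eN (tilePos ms t) ∈ P ∧ eS (tilePos ms t) ∈ P ∧
        P' = insert (eW (tilePos ms t)) (insert (eE (tilePos ms t))
          ((P.erase (eN (tilePos ms t))).erase (eS (tilePos ms t))))) ∨
      (¬Even t ∧ eW (tilePos ms t) ∈ P ∧ eE (tilePos ms t) ∈ P ∧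
        P' = insert (eN (tilePos ms t)) (insert (eS (tilePos ms t))
          ((P.erase (eW (tilePos ms t))).erase (eE (tilePos ms t))))))

/- ## Loop graphs -/

/-- The non-SW vertex of the boundary edge `c'` of tile `k` used for the loop at the first
tile (`c'` is the South or West edge of tile `k`, whichever is a boundary edge). -/
def startX' (ms : List Bool) (k : ℕ) : Vtx :=
  if ms.getD (k - 1) true then SEv (tilePos ms k) else NWv (tilePos ms k)

/-- The non-SW vertex of the chosen cut edge `c ∈ {S(G₁), W(G₁)}` (`b = true` means `c = S(G₁)`). -/
def startY (b : Bool) : Vtx := if b then (1, 0) else (0, 1)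

/-- The identification map for a loop at the first tile, glued to tile `k`:
`x = (0,0) ↦ x'` and `y ↦ y' = tilePos ms k`. -/
def startGlue (ms : List Bool) (k : ℕ) (b : Bool) : Vtx → Vtx := fun v =>
  if v = (0, 0) then startX' ms k else if v = startY b then tilePos ms k else v

def endX (ms : List Bool) : Vtx := NEv (tilePos ms ms.length)

/-- The non-NE vertex of the chosen cut edge `c ∈ {N(G_d), E(G_d)}` (`b = true` means `c = N(G_d)`). -/
def endY (ms : List Bool) (b : Bool) : Vtx :=
  if b then NWv (tilePos ms ms.length) else SEv (tilePos ms ms.length)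

def endX' (ms : List Bool) (k : ℕ) : Vtx :=
  if ms.getD k true then NWv (tilePos ms k) else SEv (tilePos ms k)

/-- The identification map for a loop at the last tile, glued to tile `k`. -/
def endGlue (ms : List Bool) (k : ℕ) (b : Bool) : Vtx → Vtx := fun v =>
  if v = endX ms then endX' ms k else if v = endY ms b then NEv (tilePos ms k) else v

/-- The quotient map of a loop graph with optional loops at each end,
each given by the index of the tile it is glued to and the choice of cut edge. -/
def loopMap (ms : List Bool) (L1 L2 : Option (ℕ × Bool)) : Vtx → Vtx :=
  (Option.elim L2 id fun kb => endGlue ms kb.1 kb.2) ∘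
    (Option.elim L1 id fun kb => startGlue ms kb.1 kb.2)

def loopEdges (ms : List Bool) (q : Vtx → Vtx) : Finset Edge :=
  (snakeEdges ms).image (Sym2.map q)

def loopVerts (ms : List Bool) (q : Vtx → Vtx) : Finset Vtx := (snakeVerts ms).image q

/-- A perfect matching of the loop graph with quotient map `q`. -/
def IsLoopPM (ms : List Bool) (q : Vtx → Vtx) (P : Finset Edge) : Prop :=
  P ⊆ loopEdges ms q ∧ ∀ v ∈ loopVerts ms q, ∃! e, e ∈ P ∧ v ∈ e

/-- `Q` is a perfect matching of the underlying snake graph extending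
the matching `P` of the loop graph. -/
def ExtendsTo (ms : List Bool) (q : Vtx → Vtx) (Q P : Finset Edge) : Prop :=
  IsPerfectMatching ms Q ∧ Q.image (Sym2.map q) = P

/-- A good matching: a perfect matching of the loop graph extendable to the snake graph. -/
def IsGoodMatching (ms : List Bool) (q : Vtx → Vtx) (P : Finset Edge) : Prop :=
  IsLoopPM ms q P ∧ ∃ Q, ExtendsTo ms q Q P

/-- The vertex `v` is matched in `P` by (the image of) a snake-graph edge at `v`
other than the cut-side edge `c`. -/
def SideMatched (ms : List Bool) (q : Vtx → Vtx) (P : Finset Edge) (v : Vtx) (c : Edge) : Prop :=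
  ∃ e₀ ∈ snakeEdges ms, e₀ ≠ c ∧ v ∈ e₀ ∧ Sym2.map q e₀ ∈ P

/-- The height of a good matching of a loop graph, via an extension to the snake graph. -/
def LoopHeightOf (ms : List Bool) (q : Vtx → Vtx) (P : Finset Edge) (I : Set ℕ) : Prop :=
  ∃ Q, ExtendsTo ms q Q P ∧ HeightOf ms Q I

/-- A perfect matching of an abstract simple graph, as a set of edges. -/
def IsPMSet {W : Type*} (G : SimpleGraph W) (P : Set (Sym2 W)) : Prop :=
  P ⊆ G.edgeSet ∧ ∀ v : W, ∃! e, e ∈ P ∧ v ∈ e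

/-!
Removing the first tile of a snake graph leaves a snake graph, and on boundary edges this is undone
by gluing a square `a b d c` onto the boundary edge `bd` shared with the second tile: `bd` becomes
interior, and the new vertices `a`, `c` are covered only by the edges `ab`, `ac`, `cd`. A perfect
matching of the larger boundary contains either `ac`, and then the rest is a matching of the smaller
boundary avoiding `bd`, or both `ab` and `cd`, which then stand in for `bd`. This bijection reduces
the count to a single tile, a 4-cycle, which has exactly two perfect matchings.
-/

open Finset

section PerfectMatching

variable {V : Type*}

/-- The square with corners `a, b, d, c` in cyclic order glued onto `E` along `bd`, which becomes
an interior edge. -/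
def glueSquare (E : Set (Sym2 V)) (a b c d : V) : Set (Sym2 V) :=
  insert s(a, c) (insert s(a, b) (insert s(c, d) (E \ {s(b, d)})))

theorem sdiff_subset_glueSquare (E : Set (Sym2 V)) (a b c d : V) :
    E \ {s(b, d)} ⊆ glueSquare E a b c d :=
  fun _ he => .inr (.inr (.inr he))

theorem subset_sdiff_of_subset_glueSquare {E : Set (Sym2 V)} {a b c d : V} {R : Finset (Sym2 V)}
    (hR : ↑R ⊆ glueSquare E a b c d) (hac : s(a, c) ∉ R) (hab : s(a, b) ∉ R)
    (hcd : s(c, d) ∉ R) : ↑R ⊆ E \ {s(b, d)} := by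
  intro e he
  rcases hR he with rfl | rfl | rfl | he'
  exacts [absurd he hac, absurd he hab, absurd he hcd, he']

structure CanGlueSquare (X : Set V) (E : Set (Sym2 V)) (a b c d : V) : Prop where
  mem_of_mem_edge : ∀ e ∈ E, ∀ v ∈ e, v ∈ X
  a_notMem : a ∉ X
  c_notMem : c ∉ X
  a_ne_c : a ≠ c
  b_mem : b ∈ X
  d_mem : d ∈ X
  b_ne_d : b ≠ d
  bd_mem : s(b, d) ∈ E

namespace CanGlueSquare

variable {X : Set V} {E : Set (Sym2 V)} {a b c d : V}

theorem notMem_edge {v : V} {e : Sym2 V} (h : CanGlueSquare X E a b c d) (he : e ∈ E)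
    (hv : v ∉ X) : v ∉ e :=
  fun hve => hv (h.mem_of_mem_edge e he v hve)

theorem distinct (h : CanGlueSquare X E a b c d) :
    a ≠ b ∧ a ≠ c ∧ a ≠ d ∧ c ≠ b ∧ c ≠ d ∧ b ≠ d ∧
      b ≠ a ∧ c ≠ a ∧ d ≠ a ∧ b ≠ c ∧ d ≠ c ∧ d ≠ b := by
  have hab : a ≠ b := fun hab => h.a_notMem (hab ▸ h.b_mem)
  have had : a ≠ d := fun had => h.a_notMem (had ▸ h.d_mem)
  have hcb : c ≠ b := fun hcb => h.c_notMem (hcb ▸ h.b_mem)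
  have hcd : c ≠ d := fun hcd => h.c_notMem (hcd ▸ h.d_mem)
  exact ⟨hab, h.a_ne_c, had, hcb, hcd, h.b_ne_d, hab.symm, h.a_ne_c.symm, had.symm, hcb.symm,
    hcd.symm, h.b_ne_d.symm⟩

theorem bd_notMem_glueSquare (h : CanGlueSquare X E a b c d) :
    s(b, d) ∉ glueSquare E a b c d := by
  simp [glueSquare, h.distinct]

end CanGlueSquare

variable [DecidableEq V]

def IsPerfectMatchingOn (X : Set V) (E : Set (Sym2 V)) (P : Finset (Sym2 V)) : Prop :=
  (P : Set (Sym2 V)) ⊆ E ∧ ∀ v ∈ X, #{e ∈ P | v ∈ e} = 1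

theorem existsUnique_mem_iff_card_filter_eq_one (P : Finset (Sym2 V)) (v : V) :
    (∃! e, e ∈ P ∧ v ∈ e) ↔ #{e ∈ P | v ∈ e} = 1 := by
  rw [card_eq_one]
  constructor
  · rintro ⟨e, he, huniq⟩
    exact ⟨e, eq_singleton_iff_unique_mem.2
      ⟨mem_filter.2 he, fun f hf => huniq f (mem_filter.1 hf)⟩⟩
  · rintro ⟨e, he⟩
    refine ⟨e, mem_filter.1 (he ▸ mem_singleton_self e), fun f hf => ?_⟩
    exact mem_singleton.1 (he ▸ mem_filter.2 hf)

theorem card_filter_mem_insert {P : Finset (Sym2 V)} {e : Sym2 V} (he : e ∉ P) (v : V) :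
    #{f ∈ insert e P | v ∈ f} = #{f ∈ P | v ∈ f} + if v ∈ e then 1 else 0 := by
  rw [filter_insert]
  split_ifs
  · exact card_insert_of_notMem fun h => he (mem_filter.1 h).1
  · rfl

theorem card_filter_mem_eq_zero {P : Finset (Sym2 V)} {v : V} (h : ∀ e ∈ P, v ∉ e) :
    #{e ∈ P | v ∈ e} = 0 :=
  card_eq_zero.2 (filter_eq_empty_iff.2 fun e he => h e he)

theorem mem_iff_notMem_of_card_filter_eq_one {P : Finset (Sym2 V)} {w : V} {e₁ e₂ : Sym2 V}
    (hP : ∀ e ∈ P, w ∈ e → e = e₁ ∨ e = e₂) (h₁ : w ∈ e₁) (h₂ : w ∈ e₂) (hne : e₁ ≠ e₂)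
    (hw : #{e ∈ P | w ∈ e} = 1) : e₁ ∈ P ↔ e₂ ∉ P := by
  constructor
  · intro he₁ he₂
    have hsub : ({e₁, e₂} : Finset (Sym2 V)) ⊆ {e ∈ P | w ∈ e} := by
      simp [insert_subset_iff, he₁, he₂, h₁, h₂]
    have := card_le_card hsub
    rw [card_pair hne] at this
    omega
  · intro he₂
    by_contra he₁
    rw [card_filter_mem_eq_zero fun e he hwe => by
      rcases hP e he hwe with rfl | rfl <;> contradiction] at hw
    exact zero_ne_one hw

theorem isPerfectMatchingOn_insert_insert_iff {X : Set V} {E E' : Set (Sym2 V)} {a c : V}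
    {P Q : Finset (Sym2 V)} (hQ : ↑Q ⊆ E') (hP : ↑P ⊆ E) (ha : #{e ∈ Q | a ∈ e} = 1)
    (hc : #{e ∈ Q | c ∈ e} = 1) (hX : ∀ w ∈ X, #{e ∈ Q | w ∈ e} = #{e ∈ P | w ∈ e}) :
    IsPerfectMatchingOn (insert a (insert c X)) E' Q ↔ IsPerfectMatchingOn X E P := by
  simp only [IsPerfectMatchingOn, Set.forall_mem_insert, hQ, hP, ha, hc, true_and]
  exact forall₂_congr fun w hw => by rw [hX w hw]

theorem setOf_isPerfectMatchingOn_square {a b c d : V} (hab : a ≠ b) (hac : a ≠ c) (had : a ≠ d)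
    (hbc : b ≠ c) (hbd : b ≠ d) (hcd : c ≠ d) :
    {P | IsPerfectMatchingOn {a, b, c, d} {s(a, c), s(a, b), s(c, d), s(b, d)} P} =
      {{s(a, c), s(b, d)}, {s(a, b), s(c, d)}} := by
  have hne : a ≠ b ∧ a ≠ c ∧ a ≠ d ∧ b ≠ c ∧ b ≠ d ∧ c ≠ d ∧
      b ≠ a ∧ c ≠ a ∧ d ≠ a ∧ c ≠ b ∧ d ≠ b ∧ d ≠ c :=
    ⟨hab, hac, had, hbc, hbd, hcd, hab.symm, hac.symm, had.symm, hbc.symm, hbd.symm, hcd.symm⟩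
  ext P
  simp only [Set.mem_ofPred_eq, Set.mem_insert_iff, Set.mem_singleton_iff]
  constructor
  · rintro ⟨hsub, hdeg⟩
    have hP : ∀ e ∈ P, e = s(a, c) ∨ e = s(a, b) ∨ e = s(c, d) ∨ e = s(b, d) := fun e he => by
      simpa using hsub he
    have h_a : s(a, c) ∈ P ↔ s(a, b) ∉ P :=
      mem_iff_notMem_of_card_filter_eq_one (fun e he hwe => by
        rcases hP e he with rfl | rfl | rfl | rfl <;> simp [hne] at hwe ⊢)
        (by simp) (by simp) (by simp [hne]) (hdeg a (by simp))
    have h_c : s(a, c) ∈ P ↔ s(c, d) ∉ P :=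
      mem_iff_notMem_of_card_filter_eq_one (fun e he hwe => by
        rcases hP e he with rfl | rfl | rfl | rfl <;> simp [hne] at hwe ⊢)
        (by simp) (by simp) (by simp [hne]) (hdeg c (by simp))
    have h_b : s(a, b) ∈ P ↔ s(b, d) ∉ P :=
      mem_iff_notMem_of_card_filter_eq_one (fun e he hwe => by
        rcases hP e he with rfl | rfl | rfl | rfl <;> simp [hne] at hwe ⊢)
        (by simp) (by simp) (by simp [hne]) (hdeg b (by simp))
    by_cases ho : s(a, c) ∈ P
    · left
      ext e
      constructor
      · intro he
        rcases hP e he with rfl | rfl | rfl | rfl <;> simp_all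
      · simp only [mem_insert, mem_singleton]
        rintro (rfl | rfl) <;> tauto
    · right
      ext e
      constructor
      · intro he
        rcases hP e he with rfl | rfl | rfl | rfl <;> simp_all
      · simp only [mem_insert, mem_singleton]
        rintro (rfl | rfl) <;> tauto
  · rintro (rfl | rfl) <;> refine ⟨by simp [Set.insert_subset_iff], ?_⟩ <;>
      rintro w (rfl | rfl | rfl | rfl) <;> simp [filter_insert, filter_singleton, hne]

theorem ncard_isPerfectMatchingOn_square {a b c d : V} (hab : a ≠ b) (hac : a ≠ c) (had : a ≠ d)
    (hbc : b ≠ c) (hbd : b ≠ d) (hcd : c ≠ d) :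
    {P | IsPerfectMatchingOn {a, b, c, d} {s(a, c), s(a, b), s(c, d), s(b, d)} P}.ncard = 2 := by
  rw [setOf_isPerfectMatchingOn_square hab hac had hbc hbd hcd]
  refine Set.ncard_pair fun h => ?_
  have := h ▸ mem_insert_self s(a, c) {s(b, d)}
  simp [hbc.symm, hac.symm, had, hcd] at this

def glueMatching (a b c d : V) (P : Finset (Sym2 V)) : Finset (Sym2 V) :=
  if s(b, d) ∈ P then insert s(a, b) (insert s(c, d) (P.erase s(b, d))) else insert s(a, c) P

def unglueMatching (a b c d : V) (Q : Finset (Sym2 V)) : Finset (Sym2 V) :=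
  if s(a, c) ∈ Q then Q.erase s(a, c) else insert s(b, d) ((Q.erase s(a, b)).erase s(c, d))

namespace CanGlueSquare

variable {X : Set V} {E : Set (Sym2 V)} {a b c d : V}

theorem isPerfectMatchingOn_insert_ac_iff (h : CanGlueSquare X E a b c d) {R : Finset (Sym2 V)}
    (hR : ↑R ⊆ E \ {s(b, d)}) :
    IsPerfectMatchingOn (insert a (insert c X)) (glueSquare E a b c d) (insert s(a, c) R) ↔
      IsPerfectMatchingOn X E R := by
  have hRE : ∀ e ∈ R, e ∈ E := fun e he => (hR he).1
  have hac : s(a, c) ∉ R := fun he => h.notMem_edge (hRE _ he) h.a_notMem (by simp)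
  refine isPerfectMatchingOn_insert_insert_iff ?_ (fun e he => hRE e he) ?_ ?_ fun w hw => ?_
  · rw [coe_insert]
    exact Set.insert_subset_iff.2 ⟨Set.mem_insert _ _, hR.trans (sdiff_subset_glueSquare ..)⟩
  · rw [card_filter_mem_insert hac,
      card_filter_mem_eq_zero fun e he => h.notMem_edge (hRE e he) h.a_notMem]
    simp
  · rw [card_filter_mem_insert hac,
      card_filter_mem_eq_zero fun e he => h.notMem_edge (hRE e he) h.c_notMem]
    simp
  · rw [card_filter_mem_insert hac]
    have hwa : w ≠ a := fun hwa => h.a_notMem (hwa ▸ hw)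
    have hwc : w ≠ c := fun hwc => h.c_notMem (hwc ▸ hw)
    simp [hwa, hwc]

theorem isPerfectMatchingOn_insert_ab_cd_iff (h : CanGlueSquare X E a b c d)
    {R : Finset (Sym2 V)} (hR : ↑R ⊆ E \ {s(b, d)}) :
    IsPerfectMatchingOn (insert a (insert c X)) (glueSquare E a b c d)
        (insert s(a, b) (insert s(c, d) R)) ↔
      IsPerfectMatchingOn X E (insert s(b, d) R) := by
  have hRE : ∀ e ∈ R, e ∈ E := fun e he => (hR he).1
  have hne := h.distinct
  have hab : s(a, b) ∉ insert s(c, d) R := by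
    simpa [hne] using fun he => h.notMem_edge (hRE _ he) h.a_notMem (by simp)
  have hcd : s(c, d) ∉ R := fun he => h.notMem_edge (hRE _ he) h.c_notMem (by simp)
  have hbd : s(b, d) ∉ R := fun he => (hR he).2 rfl
  refine isPerfectMatchingOn_insert_insert_iff ?_ ?_ ?_ ?_ fun w hw => ?_
  · simp only [coe_insert, glueSquare]
    exact (Set.insert_subset_insert (Set.insert_subset_insert hR)).trans (Set.subset_insert _ _)
  · rw [coe_insert]
    exact Set.insert_subset_iff.2 ⟨h.bd_mem, fun e he => hRE e he⟩
  · rw [card_filter_mem_insert hab, card_filter_mem_insert hcd,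
      card_filter_mem_eq_zero fun e he => h.notMem_edge (hRE e he) h.a_notMem]
    simp [hne]
  · rw [card_filter_mem_insert hab, card_filter_mem_insert hcd,
      card_filter_mem_eq_zero fun e he => h.notMem_edge (hRE e he) h.c_notMem]
    simp [hne]
  · rw [card_filter_mem_insert hab, card_filter_mem_insert hcd, card_filter_mem_insert hbd]
    have hwa : w ≠ a := fun hwa => h.a_notMem (hwa ▸ hw)
    have hwc : w ≠ c := fun hwc => h.c_notMem (hwc ▸ hw)
    -- on `X`, the edges `ab` and `cd` together meet `w` exactly when `bd` does
    by_cases hwb : w = b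
    · subst hwb
      simp [hne]
    · by_cases hwd : w = d <;> simp [hwa, hwb, hwc, hwd, hne]

theorem ab_mem_iff (h : CanGlueSquare X E a b c d) {Q : Finset (Sym2 V)}
    (hQ : IsPerfectMatchingOn (insert a (insert c X)) (glueSquare E a b c d) Q) :
    s(a, b) ∈ Q ↔ s(a, c) ∉ Q := by
  have hne := h.distinct
  refine mem_iff_notMem_of_card_filter_eq_one (fun e he hae => ?_) (by simp) (by simp)
    (by simp [hne]) (hQ.2 a (by simp))
  rcases hQ.1 he with rfl | rfl | rfl | ⟨heE, -⟩
  · exact .inr rfl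
  · exact .inl rfl
  · simp [hne] at hae
  · exact absurd hae (h.notMem_edge heE h.a_notMem)

theorem cd_mem_iff (h : CanGlueSquare X E a b c d) {Q : Finset (Sym2 V)}
    (hQ : IsPerfectMatchingOn (insert a (insert c X)) (glueSquare E a b c d) Q) :
    s(c, d) ∈ Q ↔ s(a, c) ∉ Q := by
  have hne := h.distinct
  refine mem_iff_notMem_of_card_filter_eq_one (fun e he hce => ?_) (by simp) (by simp)
    (by simp [hne]) (hQ.2 c (by simp))
  rcases hQ.1 he with rfl | rfl | rfl | ⟨heE, -⟩
  · exact .inr rfl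
  · simp [hne] at hce
  · exact .inl rfl
  · exact absurd hce (h.notMem_edge heE h.c_notMem)

theorem mapsTo_glueMatching (h : CanGlueSquare X E a b c d) :
    Set.MapsTo (glueMatching a b c d) {P | IsPerfectMatchingOn X E P}
      {Q | IsPerfectMatchingOn (insert a (insert c X)) (glueSquare E a b c d) Q} := by
  intro P hP
  unfold glueMatching
  split_ifs with hbd
  · refine (h.isPerfectMatchingOn_insert_ab_cd_iff fun e he => ?_).2 (by rwa [insert_erase hbd])
    exact ⟨hP.1 (mem_of_mem_erase he), ne_of_mem_erase he⟩
  · refine (h.isPerfectMatchingOn_insert_ac_iff fun e he => ?_).2 hP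
    exact ⟨hP.1 he, by rintro rfl; exact hbd he⟩

theorem mapsTo_unglueMatching (h : CanGlueSquare X E a b c d) :
    Set.MapsTo (unglueMatching a b c d)
      {Q | IsPerfectMatchingOn (insert a (insert c X)) (glueSquare E a b c d) Q}
      {P | IsPerfectMatchingOn X E P} := by
  intro Q hQ
  have hab := h.ab_mem_iff hQ
  have hcd := h.cd_mem_iff hQ
  unfold unglueMatching
  split_ifs with hac
  · have hR : ↑(Q.erase s(a, c)) ⊆ E \ {s(b, d)} :=
      subset_sdiff_of_subset_glueSquare ((coe_subset.2 (erase_subset _ _)).trans hQ.1)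
        (notMem_erase _ _) (fun he => hab.1 (mem_of_mem_erase he) hac)
        (fun he => hcd.1 (mem_of_mem_erase he) hac)
    exact (h.isPerfectMatchingOn_insert_ac_iff hR).1 (by rwa [insert_erase hac])
  · have hR : ↑((Q.erase s(a, b)).erase s(c, d)) ⊆ E \ {s(b, d)} :=
      subset_sdiff_of_subset_glueSquare
        ((coe_subset.2 ((erase_subset _ _).trans (erase_subset _ _))).trans hQ.1)
        (fun he => hac (mem_of_mem_erase (mem_of_mem_erase he)))
        (fun he => (mem_erase.1 (mem_of_mem_erase he)).1 rfl) (notMem_erase _ _)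
    refine (h.isPerfectMatchingOn_insert_ab_cd_iff hR).1 ?_
    rwa [insert_erase (mem_erase.2 ⟨by simp [h.distinct], hcd.2 hac⟩), insert_erase (hab.2 hac)]

theorem unglueMatching_glueMatching (h : CanGlueSquare X E a b c d) {P : Finset (Sym2 V)}
    (hP : IsPerfectMatchingOn X E P) : unglueMatching a b c d (glueMatching a b c d P) = P := by
  have hne := h.distinct
  have hPa : ∀ e ∈ P, a ∉ e := fun e he => h.notMem_edge (hP.1 he) h.a_notMem
  have hPc : ∀ e ∈ P, c ∉ e := fun e he => h.notMem_edge (hP.1 he) h.c_notMem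
  have hac : s(a, c) ∉ P := fun he => hPa _ he (by simp)
  have hab : s(a, b) ∉ insert s(c, d) (P.erase s(b, d)) := by
    simpa [hne] using fun he => hPa _ he (by simp)
  have hcd : s(c, d) ∉ P.erase s(b, d) := fun he => hPc _ (mem_of_mem_erase he) (by simp)
  unfold glueMatching unglueMatching
  split_ifs with hbd hac' hac'
  · simp [hne, hac] at hac'
  · rw [erase_insert hab, erase_insert hcd, insert_erase hbd]
  · exact erase_insert hac
  · exact absurd (mem_insert_self _ _) hac'

theorem glueMatching_unglueMatching (h : CanGlueSquare X E a b c d) {Q : Finset (Sym2 V)}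
    (hQ : IsPerfectMatchingOn (insert a (insert c X)) (glueSquare E a b c d) Q) :
    glueMatching a b c d (unglueMatching a b c d Q) = Q := by
  have hne := h.distinct
  have hbd : s(b, d) ∉ Q := fun he => h.bd_notMem_glueSquare (hQ.1 he)
  have hab := h.ab_mem_iff hQ
  have hcd := h.cd_mem_iff hQ
  unfold glueMatching unglueMatching
  split_ifs with hac hbd' hbd'
  · exact absurd (mem_of_mem_erase hbd') hbd
  · exact insert_erase hac
  · rw [erase_insert fun he => hbd (mem_of_mem_erase (mem_of_mem_erase he)),
      insert_erase (mem_erase.2 ⟨by simp [hne], hcd.2 hac⟩), insert_erase (hab.2 hac)]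
  · exact absurd (mem_insert_self _ _) hbd'

theorem ncard_isPerfectMatchingOn_glueSquare (h : CanGlueSquare X E a b c d) :
    {Q | IsPerfectMatchingOn (insert a (insert c X)) (glueSquare E a b c d) Q}.ncard =
      {P | IsPerfectMatchingOn X E P}.ncard :=
  Set.BijOn.ncard_eq <| Set.InvOn.bijOn
    ⟨fun _ hQ => h.glueMatching_unglueMatching hQ, fun _ hP => h.unglueMatching_glueMatching hP⟩
    h.mapsTo_unglueMatching h.mapsTo_glueMatching

end CanGlueSquare

end PerfectMatching

/-- Every move raises the level by one, which separates the first tile from the rest. -/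
def level (v : Vtx) : ℤ := v.1 + v.2

theorem level_mv (p : Vtx) (m : Bool) : level (mv p m) = level p + 1 := by
  cases m <;> simp only [mv, level, Bool.false_eq_true, if_true, if_false] <;> ring

theorem level_NEv (p : Vtx) : level (NEv p) = level p + 2 := by
  simp only [NEv, level]; ring

theorem mv_ne_mv_not (p : Vtx) (m : Bool) : mv p m ≠ mv p !m := by
  cases m <;> simp [mv]

theorem tileVerts_eq (p : Vtx) (m : Bool) : tileVerts p = {p, mv p m, mv p !m, NEv p} := by
  cases m <;> simp [tileVerts, mv, NEv, Finset.insert_comm]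

theorem tileEdges_eq (p : Vtx) (m : Bool) :
    tileEdges p = {s(p, mv p !m), s(p, mv p m), s(mv p !m, NEv p), s(mv p m, NEv p)} := by
  cases m <;> ext <;> simp [tileEdges, eS, eW, eN, eE, mv, NEv] <;> tauto

theorem NEv_mem_tileVerts_mv (p : Vtx) (m : Bool) : NEv p ∈ tileVerts (mv p m) := by
  cases m <;> simp [tileVerts, mv, NEv]

theorem mem_tileEdges_mv (p : Vtx) (m : Bool) : s(mv p m, NEv p) ∈ tileEdges (mv p m) := by
  cases m <;> simp [tileEdges, eS, eW, mv, NEv]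

theorem eq_or_level_lt_of_mem_tileVerts {v q : Vtx} (h : v ∈ tileVerts q) :
    v = q ∨ level q < level v := by
  simp only [tileVerts, mem_insert, mem_singleton] at h
  rcases h with rfl | rfl | rfl | rfl <;> simp only [level, true_or] <;> omega

theorem mem_tileVerts_of_mem_tileEdges {e : Edge} {q v : Vtx} (he : e ∈ tileEdges q)
    (hv : v ∈ e) : v ∈ tileVerts q := by
  simp only [tileEdges, mem_insert, mem_singleton] at he
  rcases he with rfl | rfl | rfl | rfl <;>
    rcases Sym2.mem_iff.1 hv with rfl | rfl <;> simp [tileVerts]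

theorem List.self_mem_scanl {α β : Type*} (f : β → α → β) (b : β) (l : List α) :
    b ∈ l.scanl f b := by
  cases l <;> simp

theorem eq_or_level_lt_of_mem_scanl_mv {p q : Vtx} {ms : List Bool} (h : q ∈ ms.scanl mv p) :
    q = p ∨ level p < level q := by
  induction ms generalizing p with
  | nil => exact .inl (by simpa using h)
  | cons m ms ih =>
    rw [List.scanl_cons, List.mem_cons] at h
    rcases h with rfl | h
    · exact .inl rfl
    · rcases ih h with rfl | h <;> rw [level_mv] at * <;> omega

def tilesVerts (L : List Vtx) : Set Vtx := {v | ∃ q ∈ L, v ∈ tileVerts q}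

def tilesBoundary (L : List Vtx) : Set Edge := {e | #{q ∈ L.toFinset | e ∈ tileEdges q} = 1}

theorem eq_or_level_lt_of_mem_tilesVerts_scanl_mv {p v : Vtx} {ms : List Bool}
    (h : v ∈ tilesVerts (ms.scanl mv p)) : v = p ∨ level p < level v := by
  obtain ⟨q, hq, hv⟩ := h
  rcases eq_or_level_lt_of_mem_scanl_mv hq with rfl | hq <;>
    rcases eq_or_level_lt_of_mem_tileVerts hv with rfl | hv <;>
    first | exact .inl rfl | exact .inr (by omega)

theorem exists_mem_tileEdges_of_mem_tilesBoundary {L : List Vtx} {e : Edge}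
    (he : e ∈ tilesBoundary L) : ∃ q ∈ L, e ∈ tileEdges q := by
  obtain ⟨q, hq⟩ := card_pos.1 (he.symm ▸ one_pos : 0 < #{q ∈ L.toFinset | e ∈ tileEdges q})
  exact ⟨q, List.mem_toFinset.1 (mem_filter.1 hq).1, (mem_filter.1 hq).2⟩

theorem canGlueSquare_scanl_mv (p : Vtx) (m : Bool) (ms : List Bool) :
    CanGlueSquare (tilesVerts (ms.scanl mv (mv p m))) (tilesBoundary (ms.scanl mv (mv p m)))
      p (mv p m) (mv p !m) (NEv p) where
  mem_of_mem_edge e he v hv :=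
    let ⟨q, hq, heq⟩ := exists_mem_tileEdges_of_mem_tilesBoundary he
    ⟨q, hq, mem_tileVerts_of_mem_tileEdges heq hv⟩
  a_notMem hp := by
    have := level_mv p m
    rcases eq_or_level_lt_of_mem_tilesVerts_scanl_mv hp with h | h
    · rw [← h] at this; omega
    · omega
  c_notMem hc := by
    have := level_mv p !m
    rcases eq_or_level_lt_of_mem_tilesVerts_scanl_mv hc with h | h
    · exact mv_ne_mv_not p m h.symm
    · rw [level_mv] at h; omega
  a_ne_c h := by have := level_mv p !m; rw [← h] at this; omega
  b_mem := ⟨mv p m, List.self_mem_scanl _ _ _, by simp [tileVerts_eq _ m]⟩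
  d_mem := ⟨mv p m, List.self_mem_scanl _ _ _, NEv_mem_tileVerts_mv p m⟩
  b_ne_d h := by have := level_NEv p; rw [← h, level_mv] at this; omega
  bd_mem := by
    refine card_eq_one.2 ⟨mv p m, eq_singleton_iff_unique_mem.2 ⟨?_, fun q hq => ?_⟩⟩
    · exact mem_filter.2 ⟨List.mem_toFinset.2 (List.self_mem_scanl _ _ _), mem_tileEdges_mv p m⟩
    obtain ⟨hq, hg⟩ := mem_filter.1 hq
    have hb := mem_tileVerts_of_mem_tileEdges hg (Sym2.mem_mk_left _ _)
    rcases eq_or_level_lt_of_mem_scanl_mv (List.mem_toFinset.1 hq) with h | h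
    · exact h
    · rcases eq_or_level_lt_of_mem_tileVerts hb with h' | h' <;> [exact h'.symm; omega]

theorem tilesVerts_scanl_cons (p : Vtx) (m : Bool) (ms : List Bool) :
    tilesVerts ((m :: ms).scanl mv p) =
      insert p (insert (mv p !m) (tilesVerts (ms.scanl mv (mv p m)))) := by
  have h := canGlueSquare_scanl_mv p m ms
  ext v
  simp only [tilesVerts, List.scanl_cons, List.mem_cons, exists_eq_or_imp, tileVerts_eq p m,
    mem_insert, mem_singleton, Set.mem_insert_iff, Set.mem_ofPred_eq]
  constructor
  · rintro ((rfl | rfl | rfl | rfl) | hv)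
    exacts [.inl rfl, .inr (.inr h.b_mem), .inr (.inl rfl), .inr (.inr h.d_mem), .inr (.inr hv)]
  · rintro (rfl | rfl | hv)
    exacts [.inl (.inl rfl), .inl (.inr (.inr (.inl rfl))), .inr hv]

theorem tilesBoundary_scanl_cons (p : Vtx) (m : Bool) (ms : List Bool) :
    tilesBoundary ((m :: ms).scanl mv p) =
      glueSquare (tilesBoundary (ms.scanl mv (mv p m))) p (mv p m) (mv p !m) (NEv p) := by
  have h := canGlueSquare_scanl_mv p m ms
  rw [List.scanl_cons]
  set L := ms.scanl mv (mv p m)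
  have hp : p ∉ L.toFinset := fun hp => h.a_notMem ⟨p, List.mem_toFinset.1 hp, by simp [tileVerts]⟩
  have hfree : ∀ e : Edge, ∀ v ∈ e, v ∉ tilesVerts L → #{q ∈ L.toFinset | e ∈ tileEdges q} = 0 :=
    fun e v hve hv => card_eq_zero.2 <| filter_eq_empty_iff.2 fun q hq he =>
      hv ⟨q, List.mem_toFinset.1 hq, mem_tileVerts_of_mem_tileEdges he hve⟩
  ext e
  simp only [tilesBoundary, Set.mem_ofPred_eq, List.toFinset_cons, filter_insert]
  split_ifs with he
  · rw [card_insert_of_notMem fun h => hp (mem_filter.1 h).1]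
    rw [tileEdges_eq p m] at he
    simp only [mem_insert, mem_singleton] at he
    rcases he with rfl | rfl | rfl | rfl
    · rw [hfree _ p (by simp) h.a_notMem]; simp [glueSquare]
    · rw [hfree _ p (by simp) h.a_notMem]; simp [glueSquare]
    · rw [hfree _ (mv p !m) (by simp) h.c_notMem]; simp [glueSquare]
    · have hg : #{q ∈ L.toFinset | s(mv p m, NEv p) ∈ tileEdges q} = 1 := h.bd_mem
      exact iff_of_false (by omega) h.bd_notMem_glueSquare
  · rw [tileEdges_eq p m] at he
    simp only [mem_insert, mem_singleton, not_or] at he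
    simp [glueSquare, he]

theorem tilesVerts_singleton (p : Vtx) : tilesVerts [p] = tileVerts p := by
  ext v
  simp [tilesVerts]

theorem tilesBoundary_singleton (p : Vtx) : tilesBoundary [p] = tileEdges p := by
  ext e
  simp only [tilesBoundary, Set.mem_ofPred_eq, List.toFinset_cons, List.toFinset_nil,
    insert_empty_eq, filter_singleton, mem_coe]
  split_ifs with he <;> simp [he]

theorem ncard_isPerfectMatchingOn_tiles_scanl_mv (p : Vtx) (ms : List Bool) :
    {P | IsPerfectMatchingOn (tilesVerts (ms.scanl mv p)) (tilesBoundary (ms.scanl mv p)) P}.ncard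
      = 2 := by
  induction ms generalizing p with
  | nil =>
    rw [List.scanl_nil, tilesVerts_singleton, tilesBoundary_singleton, tileVerts_eq p true,
      tileEdges_eq p true]
    push_cast
    exact ncard_isPerfectMatchingOn_square (by simp [mv, Prod.ext_iff]) (by simp [mv, Prod.ext_iff])
      (by simp [NEv, Prod.ext_iff]) (mv_ne_mv_not p true) (by simp [mv, NEv]) (by simp [mv, NEv])
  | cons m ms ih =>
    rw [tilesVerts_scanl_cons, tilesBoundary_scanl_cons,
      (canGlueSquare_scanl_mv p m ms).ncard_isPerfectMatchingOn_glueSquare, ih]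

theorem isPerfectMatching_and_isBoundaryEdge_iff (ms : List Bool) (P : Finset Edge) :
    (IsPerfectMatching ms P ∧ ∀ e ∈ P, IsBoundaryEdge ms e) ↔
      IsPerfectMatchingOn (tilesVerts (positions ms)) (tilesBoundary (positions ms)) P := by
  have hverts : ∀ v, v ∈ snakeVerts ms ↔ v ∈ tilesVerts (positions ms) := by
    simp [snakeVerts, tilesVerts]
  have hedges : ∀ e, IsBoundaryEdge ms e → e ∈ snakeEdges ms := fun e he =>
    let ⟨q, hq, he⟩ := exists_mem_tileEdges_of_mem_tilesBoundary he
    mem_biUnion.2 ⟨q, List.mem_toFinset.2 hq, he⟩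
  simp only [IsPerfectMatching, IsPerfectMatchingOn, hverts,
    existsUnique_mem_iff_card_filter_eq_one]
  constructor
  · rintro ⟨⟨-, hdeg⟩, hP⟩
    exact ⟨hP, hdeg⟩
  · rintro ⟨hP, hdeg⟩
    exact ⟨⟨fun e he => hedges e (hP he), hdeg⟩, hP⟩

/-- a snake graph has exactly two perfect matchings consisting entirely of
boundary edges. -/
theorem statement18 (ms : List Bool) :
    {P : Finset Edge | IsPerfectMatching ms P ∧ ∀ e ∈ P, IsBoundaryEdge ms e}.ncard = 2 := by
  simp only [isPerfectMatching_and_isBoundaryEdge_iff]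
  exact ncard_isPerfectMatchingOn_tiles_scanl_mv (0, 0) ms
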